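/- Let H₄ be the Hurwitz monodromy group of degree 4, and let 𝒬′ be the subgroup of H₄ generated by α = q₁q₂q₃ and γ = q₁q₃⁻¹. Then 𝒬′ is isomorphic to the generalized quaternion (dicyclic) group Q₁₆ of order 16, and the quotient of 𝒬′ by the central subgroup generated by z = (q₁q₃⁻¹)² is isomorphic to the dihedral group of order 8. -/

import Mathlib

namespace Stmt5

/-- The braid and Hurwitz relations defining the Hurwitz monodromy group `H₄`:
`q₁q₂q₁ = q₂q₁q₂`, `q₂q₃q₂ = q₃q₂q₃`, `q₁q₃ = q₃q₁` and `q₁q₂q₃q₃q₂q₁ = 1`. -/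
def H4Rels : Set (FreeGroup (Fin 3)) :=
  { FreeGroup.of 0 * FreeGroup.of 1 * FreeGroup.of 0 *
      (FreeGroup.of 1 * FreeGroup.of 0 * FreeGroup.of 1)⁻¹,
    FreeGroup.of 1 * FreeGroup.of 2 * FreeGroup.of 1 *
      (FreeGroup.of 2 * FreeGroup.of 1 * FreeGroup.of 2)⁻¹,
    FreeGroup.of 0 * FreeGroup.of 2 * (FreeGroup.of 2 * FreeGroup.of 0)⁻¹,
    FreeGroup.of 0 * FreeGroup.of 1 * FreeGroup.of 2 * FreeGroup.of 2 *
      FreeGroup.of 1 * FreeGroup.of 0 }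

/-- The Hurwitz monodromy group of degree 4. -/
abbrev H4 : Type := PresentedGroup H4Rels

/-- The generators `q₁, q₂, q₃` of `H₄` (indexed by `0, 1, 2`). -/
def q (i : Fin 3) : H4 := PresentedGroup.of i


/-- `α = q₁q₂q₃`. -/
def α : H4 := q 0 * q 1 * q 2

/-- `γ = q₁q₃⁻¹`. -/
def γ : H4 := q 0 * (q 2)⁻¹

/-- `z = (q₁q₃⁻¹)²`. -/
def z : H4 := (q 0 * (q 2)⁻¹) ^ 2

/-- `𝒬′ = ⟨α, γ⟩ = ⟨q₁q₂q₃, q₁q₃⁻¹⟩`. -/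
def Q' : Subgroup H4 := Subgroup.closure {α, γ}

/-! ### Auxiliary development -/

local notation "a" => q 0
local notation "b" => q 1
local notation "c" => q 2

lemma hrel (r : FreeGroup (Fin 3)) (h : r ∈ H4Rels) : PresentedGroup.mk H4Rels r = 1 := by
  rw [show (1 : H4) = PresentedGroup.mk H4Rels 1 from rfl]
  apply QuotientGroup.eq.mpr
  simpa using Subgroup.subset_normalClosure h

lemma h1 : a * b * a = b * a * b := by
  have := hrel _ (show _ ∈ H4Rels from Set.mem_insert _ _)
  simp only [map_mul, map_inv] at this
  have h := mul_inv_eq_one.mp this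
  simpa [q, PresentedGroup.of, map_mul] using h

lemma h2 : b * c * b = c * b * c := by
  have := hrel _ (show _ ∈ H4Rels from Set.mem_insert_of_mem _ (Set.mem_insert _ _))
  simp only [map_mul, map_inv] at this
  have h := mul_inv_eq_one.mp this
  simpa [q, PresentedGroup.of, map_mul] using h

lemma h3 : a * c = c * a := by
  have := hrel _ (show _ ∈ H4Rels from
    Set.mem_insert_of_mem _ (Set.mem_insert_of_mem _ (Set.mem_insert _ _)))
  simp only [map_mul, map_inv] at this
  have h := mul_inv_eq_one.mp this
  simpa [q, PresentedGroup.of, map_mul] using h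

lemma h4 : a * b * c * c * b * a = 1 := by
  have := hrel _ (show _ ∈ H4Rels from
    Set.mem_insert_of_mem _ (Set.mem_insert_of_mem _ (Set.mem_insert_of_mem _ rfl)))
  simpa [q, PresentedGroup.of, map_mul] using this

lemma hac : Commute (q 0) (q 2) := h3

lemma hc2 : c * c = b⁻¹ * (a⁻¹ * a⁻¹) * b⁻¹ := by
  have h4' : a * b * (c * c) * b * a = 1 := by rw [← h4]; group
  calc c * c = b⁻¹ * a⁻¹ * (a * b * (c * c) * b * a) * a⁻¹ * b⁻¹ := by group
    _ = b⁻¹ * a⁻¹ * 1 * a⁻¹ * b⁻¹ := by rw [h4']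
    _ = b⁻¹ * (a⁻¹ * a⁻¹) * b⁻¹ := by group

lemma Lγ : γ = (a * b * a) * α := by
  calc γ = a * (c * c)⁻¹ * c := by rw [γ]; group
    _ = a * (b⁻¹ * (a⁻¹ * a⁻¹) * b⁻¹)⁻¹ * c := by rw [hc2]
    _ = (a * b * a) * α := by rw [α]; group; simp [pow_succ, pow_zero, mul_assoc]

lemma G1 : γ * α * γ⁻¹ = α⁻¹ := by
  have hca : c⁻¹ * a = a * c⁻¹ := (hac.symm.inv_left).eq
  have hC : c⁻¹ * (a⁻¹ * a⁻¹) = (a⁻¹ * a⁻¹) * c⁻¹ :=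
    ((hac.symm.inv_left.inv_right).mul_right (hac.symm.inv_left.inv_right)).eq
  calc γ * α * γ⁻¹ = a * (c⁻¹ * a) * b * (c * c) * a⁻¹ := by rw [γ, α]; group
    _ = a * (a * c⁻¹) * b * (c * c) * a⁻¹ := by rw [hca]
    _ = a * (a * c⁻¹) * b * (b⁻¹ * (a⁻¹ * a⁻¹) * b⁻¹) * a⁻¹ := by rw [hc2]
    _ = a * a * (c⁻¹ * (a⁻¹ * a⁻¹)) * b⁻¹ * a⁻¹ := by group
    _ = a * a * ((a⁻¹ * a⁻¹) * c⁻¹) * b⁻¹ * a⁻¹ := by rw [hC]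
    _ = α⁻¹ := by rw [α]; group

lemma E2 : a * (b * c * b) * a = c * (b * a * b) * c := by
  calc a * (b * c * b) * a = a * (c * b * c) * a := by rw [h2]
    _ = (a * c) * b * (c * a) := by group
    _ = (c * a) * b * (c * a) := by rw [h3]
    _ = (c * a) * b * (a * c) := by nth_rewrite 2 [← h3]; rfl
    _ = c * (a * b * a) * c := by group
    _ = c * (b * a * b) * c := by rw [h1]

lemma L6 : (a * b * c) * (a * b * a) = (b * c * b) * (a * b * c) := by
  calc (a * b * c) * (a * b * a) = (a * b) * (c * a) * (b * a) := by group
    _ = (a * b) * (a * c) * (b * a) := by rw [← h3]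
    _ = (a * b * a) * (c * (b * a)) := by group
    _ = (b * a * b) * (c * (b * a)) := by rw [h1]
    _ = b * (a * (b * c * b) * a) := by group
    _ = b * (c * (b * a * b) * c) := by rw [E2]
    _ = (b * c * b) * (a * b * c) := by group

lemma Lα2 : α * α = (a * b * a) * (c * b * c) := by
  calc α * α = (a * b) * (c * a) * (b * c) := by rw [α]; group
    _ = (a * b) * (a * c) * (b * c) := by rw [← h3]
    _ = (a * b * a) * (c * b * c) := by group

lemma Lα3 : α * α * α = (a * b * a) * α * (a * b * a) := by
  calc α * α * α = (a * b * a) * ((c * b * c) * α) := by rw [Lα2]; group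
    _ = (a * b * a) * ((b * c * b) * (a * b * c)) := by rw [← h2, α]
    _ = (a * b * a) * ((a * b * c) * (a * b * a)) := by rw [← L6]
    _ = (a * b * a) * α * (a * b * a) := by rw [α]; group

lemma G2 : γ * γ = α ^ 4 := by
  calc γ * γ = ((a * b * a) * α) * ((a * b * a) * α) := by rw [Lγ]
    _ = ((a * b * a) * α * (a * b * a)) * α := by group
    _ = (α * α * α) * α := by rw [← Lα3]
    _ = α ^ 4 := by simp [pow_succ]

lemma G3 : α ^ 8 = 1 := by
  have e2 : γ * α ^ 4 * γ⁻¹ = (γ * α * γ⁻¹) ^ 4 := conj_pow.symm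
  rw [G1] at e2
  have e3 : γ * (γ * γ) * γ⁻¹ = γ * γ := by group
  rw [G2] at e3
  have h : α ^ 4 = α⁻¹ ^ 4 := by rw [← e3, e2]
  calc α ^ 8 = α ^ 4 * α ^ 4 := by group
    _ = α⁻¹ ^ 4 * α ^ 4 := by rw [h]
    _ = 1 := by group

/-! ### The embedding of `Q₁₆` into `H₄` -/

noncomputable def P (i : ZMod (2 * 4)) : H4 := α ^ i.val

lemma G3' : α ^ (2 * 4) = 1 := by norm_num [G3]

lemma P_add (i j : ZMod (2 * 4)) : P (i + j) = P i * P j := by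
  unfold P
  rw [ZMod.val_add, ← pow_eq_pow_mod _ G3', pow_add]

lemma P_zero : P 0 = 1 := by simp [P, ZMod.val_zero]

lemma P_inv (i : ZMod (2 * 4)) : (P i)⁻¹ = P (-i) := by
  apply inv_eq_of_mul_eq_one_right
  rw [← P_add]; simp [P_zero]

lemma sc : SemiconjBy γ⁻¹ α α⁻¹ := by
  have k1 : γ⁻¹ * (γ * α * γ⁻¹) * γ = γ⁻¹ * α⁻¹ * γ := by rw [G1]
  have k2 : α = γ⁻¹ * α⁻¹ * γ := by rw [← k1]; group
  have k3 : α⁻¹ = γ⁻¹ * α * γ := by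
    conv_lhs => rw [k2]
    group
  show γ⁻¹ * α = α⁻¹ * γ⁻¹
  rw [k3]; group

lemma hPγ (i : ZMod (2 * 4)) : P i * γ = γ * P (-i) := by
  rw [← P_inv]
  unfold P
  have h := (sc.pow_right i.val).eq
  rw [inv_pow] at h
  calc α ^ i.val * γ = γ * (γ⁻¹ * α ^ i.val) * γ := by group
    _ = γ * ((α ^ i.val)⁻¹ * γ⁻¹) * γ := by rw [h]
    _ = γ * (α ^ i.val)⁻¹ := by group

lemma hγγ : γ * γ = P 4 := by
  rw [G2]; unfold P; congr 1

noncomputable def fFun : QuaternionGroup 4 → H4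
  | .a i => P i
  | .xa i => γ * P i

lemma fFun_mul (x y : QuaternionGroup 4) : fFun (x * y) = fFun x * fFun y := by
  rcases x with i | i <;> rcases y with j | j
  · show P (i + j) = P i * P j
    exact P_add i j
  · show γ * P (j - i) = P i * (γ * P j)
    rw [← mul_assoc, hPγ, mul_assoc, ← P_add]
    congr 1; ring_nf
  · show γ * P (i + j) = γ * P i * P j
    rw [P_add, mul_assoc]
  · show P (↑(4 : ℕ) + j - i) = γ * P i * (γ * P j)
    rw [show γ * P i * (γ * P j) = γ * (P i * γ) * P j by simp only [mul_assoc]]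
    rw [hPγ, show γ * (γ * P (-i)) * P j = (γ * γ) * (P (-i) * P j) by simp only [mul_assoc]]
    rw [hγγ, ← P_add, ← P_add]
    congr 1; push_cast; ring_nf

noncomputable def f : QuaternionGroup 4 →* H4 := MonoidHom.mk' fFun fFun_mul

lemma f_a (i : ZMod (2 * 4)) : f (QuaternionGroup.a i) = P i := rfl
lemma f_xa (i : ZMod (2 * 4)) : f (QuaternionGroup.xa i) = γ * P i := rfl

/-! ### A faithful finite image: `SL₂(𝔽₇)` -/

abbrev M7 : Type := Matrix.SpecialLinearGroup (Fin 2) (ZMod 7)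

def X : M7 := ⟨!![0, 1; 6, 3], by norm_num [Matrix.det_fin_two_of]; decide⟩
def Y : M7 := ⟨!![0, 3; 2, 3], by norm_num [Matrix.det_fin_two_of]; decide⟩
def Z : M7 := ⟨!![3, 6; 1, 0], by norm_num [Matrix.det_fin_two_of]; decide⟩

instance : DecidableEq M7 :=
  fun A B => decidable_of_iff ((A : Matrix (Fin 2) (Fin 2) (ZMod 7)) = B) Subtype.ext_iff.symm

def gfun : Fin 3 → M7 := ![X, Y, Z]

lemma hrels : ∀ r ∈ H4Rels, FreeGroup.lift gfun r = 1 := by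
  intro r hr
  simp only [H4Rels, Set.mem_insert_iff, Set.mem_singleton_iff] at hr
  rcases hr with rfl | rfl | rfl | rfl <;>
    · simp only [map_mul, map_inv, FreeGroup.lift_apply_of]
      decide

noncomputable def gg : H4 →* M7 := PresentedGroup.toGroup hrels

lemma gg_q (i : Fin 3) : gg (q i) = gfun i := PresentedGroup.toGroup.of hrels

lemma hZinv : (Z)⁻¹ = X := inv_eq_of_mul_eq_one_left (by decide)

def Aimg : M7 := X * Y * Z
def Cimg : M7 := X * X

lemma gg_α : gg α = Aimg := by
  rw [α, map_mul, map_mul, gg_q, gg_q, gg_q]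
  rfl

lemma gg_γ : gg γ = Cimg := by
  rw [γ, map_mul, map_inv, gg_q, gg_q]
  show X * (Z)⁻¹ = Cimg
  rw [hZinv]; rfl

def F : QuaternionGroup 4 → M7
  | .a i => Aimg ^ i.val
  | .xa i => Cimg * Aimg ^ i.val

lemma hgf (w : QuaternionGroup 4) : gg (f w) = F w := by
  rcases w with i | i
  · rw [f_a]
    show gg (α ^ i.val) = Aimg ^ i.val
    rw [map_pow, gg_α]
  · rw [f_xa]
    show gg (γ * α ^ i.val) = Cimg * Aimg ^ i.val
    rw [map_mul, map_pow, gg_α, gg_γ]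

lemma hFinj : Function.Injective F := by decide

lemma finj : Function.Injective f := fun x y hxy => hFinj (by rw [← hgf, ← hgf, hxy])

lemma hαQ : α ∈ Q' := Subgroup.subset_closure (Set.mem_insert _ _)
lemma hγQ : γ ∈ Q' := Subgroup.subset_closure (Set.mem_insert_of_mem _ rfl)

lemma hrange : f.range = Q' := by
  apply le_antisymm
  · rintro w ⟨x, rfl⟩
    rcases x with i | i
    · rw [f_a]
      exact pow_mem hαQ _
    · rw [f_xa]
      exact mul_mem hγQ (pow_mem hαQ _)
  · rw [Q']
    apply (Subgroup.closure_le _).mpr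
    rintro w (rfl | rfl)
    · exact ⟨QuaternionGroup.a 1, by rw [f_a]; show α ^ (1 : ZMod (2*4)).val = α; rw [show (1 : ZMod (2*4)).val = 1 by decide, pow_one]⟩
    · exact ⟨QuaternionGroup.xa 0, by rw [f_xa, P_zero, mul_one]⟩

/-! ### The isomorphism and the dihedral quotient -/

noncomputable def e : Q' ≃* QuaternionGroup 4 :=
  ((MonoidHom.ofInjective finj).trans (MulEquiv.subgroupCongr hrange)).symm

lemma he (w : QuaternionGroup 4) : ((e.symm w : Q') : H4) = f w := rfl

lemma he2 (x : Q') : f (e x) = (x : H4) := by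
  have h := he (e x)
  rw [MulEquiv.symm_apply_apply] at h
  exact h.symm

def ψF : QuaternionGroup 4 → DihedralGroup 4
  | .a i => .r (i.val : ZMod 4)
  | .xa i => .sr (i.val : ZMod 4)

def ψ : QuaternionGroup 4 →* DihedralGroup 4 := MonoidHom.mk' ψF (by decide)

lemma hψsurj : Function.Surjective ψF := by decide

lemma hψker : ∀ w : QuaternionGroup 4, ψF w = 1 ↔ (w = 1 ∨ w = QuaternionGroup.a 4) := by decide

lemma hfz : f (QuaternionGroup.a (4 : ZMod (2 * 4))) = z := by
  rw [f_a, ← hγγ]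
  show γ * γ = γ ^ 2
  rw [sq]

lemma hzz : z * z = 1 := by
  show γ ^ 2 * γ ^ 2 = 1
  rw [sq, hγγ, ← P_add]
  rw [show ((4 : ZMod (2*4)) + 4) = 0 by decide, P_zero]

lemma hzQ : z ∈ Q' := by
  show γ ^ 2 ∈ Q'
  exact pow_mem hγQ 2

noncomputable def φ : Q' →* DihedralGroup 4 := ψ.comp e.toMonoidHom

lemma hφsurj : Function.Surjective φ := hψsurj.comp e.surjective

lemma hφker : φ.ker = (Subgroup.zpowers z).subgroupOf Q' := by
  ext x
  rw [MonoidHom.mem_ker, Subgroup.mem_subgroupOf]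
  have hφx : φ x = ψF (e x) := rfl
  rw [hφx, hψker]
  constructor
  · rintro (h | h)
    · have : (x : H4) = 1 := by rw [← he2 x, h, map_one]
      rw [this]; exact one_mem _
    · have : (x : H4) = z := by rw [← he2 x, h, hfz]
      rw [this]; exact Subgroup.mem_zpowers z
  · rintro ⟨k, hk0⟩
    have hk : z ^ k = (x : H4) := hk0
    have hxz : (x : H4) = 1 ∨ (x : H4) = z := by
      rcases Int.even_or_odd k with ⟨m, rfl⟩ | ⟨m, rfl⟩
      · left
        rw [← hk, zpow_add, ← (Commute.refl z).mul_zpow, hzz, one_zpow]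
      · right
        rw [← hk, zpow_add, zpow_one, zpow_mul, zpow_two, hzz, one_zpow, one_mul]
    rcases hxz with h | h
    · left
      apply finj
      rw [he2, h, map_one]
    · right
      apply finj
      rw [he2, h, hfz]

/-- `𝒬′` is isomorphic to the generalized quaternion group `Q₁₆` of order 16, it contains
`z = (q₁q₃⁻¹)²`, and the quotient of `𝒬′` by the central subgroup generated by `z` is the
dihedral group of order 8. -/
theorem Q'_is_Q16 :
    Nonempty (Q' ≃* QuaternionGroup 4) ∧ z ∈ Q' ∧
      ∃ φ : Q' →* DihedralGroup 4, Function.Surjective φ ∧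
        φ.ker = (Subgroup.zpowers z).subgroupOf Q' := by
  exact ⟨⟨e⟩, hzQ, φ, hφsurj, hφker⟩

end Stmt5
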